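/- Let q ≥ 2 and let S = (P, L, I) be a finite generalized hexagon of order (q,q) such that for every pair of lines ℓ₁, ℓ₂ at distance 6 in the incidence graph of S there is a unique subhexagon of S of order (q,1) containing both ℓ₁ and ℓ₂. Then the total number of subhexagons of S of order (q,1) is q³(1+q)(q² − q + 1)/2. -/

import Mathlib

open SimpleGraph
section Geometry

variable {P L : Type*}

/-- The adjacency relation of the incidence graph of a point-line geometry. -/
def IncAdj (I : P → L → Prop) : P ⊕ L → P ⊕ L → Prop
  | Sum.inl p, Sum.inr l => I p l
  | Sum.inr l, Sum.inl p => I p l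
  | _, _ => False

/-- The incidence graph of a point-line geometry: vertices are points and lines,
a point is adjacent to a line iff they are incident. -/
def incidenceGraph (I : P → L → Prop) : SimpleGraph (P ⊕ L) where
  Adj := IncAdj I
  symm := ⟨by intro a b h; cases a <;> cases b <;> simp_all [IncAdj]⟩
  loopless := ⟨by intro a h; cases a <;> simp_all [IncAdj]⟩

/-- The point graph of a point-line geometry: distinct points are adjacent iff they
are incident with a common line. -/
def pointGraph (I : P → L → Prop) : SimpleGraph P where
  Adj x y := x ≠ y ∧ ∃ l, I x l ∧ I y l
  symm := ⟨by rintro x y ⟨h, l, hx, hy⟩; exact ⟨h.symm, l, hy, hx⟩⟩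
  loopless := ⟨by rintro x ⟨h, -⟩; exact h rfl⟩

/-- Distance from a point to a line: the minimum point-graph distance from `x`
to a point incident with `l`. -/
noncomputable def distPL (I : P → L → Prop) (x : P) (l : L) : ℕ :=
  sInf ((pointGraph I).dist x '' {y | I y l})

/-- Distance between two lines: the minimum point-graph distance between a point of `l`
and a point of `l'`. -/
noncomputable def distLL (I : P → L → Prop) (l l' : L) : ℕ :=
  sInf {n | ∃ x y, I x l ∧ I y l' ∧ (pointGraph I).dist x y = n}

/-- A generalized `n`-gon of order `(s, t)`: every line has `s + 1` points, every point is
on `t + 1` lines, and the incidence graph has diameter `n` and girth `2 * n`. -/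
structure IsGenPolygon (I : P → L → Prop) (n s t : ℕ) : Prop where
  pts_nonempty : Nonempty P
  line_card : ∀ l : L, {p : P | I p l}.ncard = s + 1
  point_card : ∀ p : P, {l : L | I p l}.ncard = t + 1
  ediam_eq : (incidenceGraph I).ediam = n
  egirth_eq : (incidenceGraph I).egirth = 2 * n

/-- A subhexagon of order `(s, t')` of a generalized hexagon. -/
def IsSubhexagon (I : P → L → Prop) (s t' : ℕ) (P' : Set P) (L' : Set L) : Prop :=
  (∀ p : P, ∀ l ∈ L', I p l → p ∈ P') ∧
  IsGenPolygon (fun (p : P') (l : L') => I p.1 l.1) 6 s t'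

/-- A distance-`j` ovoid of a generalized `2d`-gon (in terms of the point graph). -/
def IsDistanceOvoid (I : P → L → Prop) (j : ℕ) (O : Set P) : Prop :=
  (∀ x ∈ O, ∀ y ∈ O, x ≠ y → j ≤ (pointGraph I).dist x y) ∧
  (∀ a : P, ∃ x ∈ O, 2 * (pointGraph I).dist a x ≤ j) ∧
  (∀ l : L, ∃ x ∈ O, 2 * distPL I x l ≤ j - 1)

end Geometry

/-!
Double count the ordered pairs of lines at distance 6 against the subhexagons of order `(q, 1)`
containing them: each such pair lies in exactly one subhexagon. In a generalized hexagon of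
order `(s, t)` a line has `s²t³` lines at opposite position and there are
`(1 + t)(1 + st + s²t²)` lines; both counts come from the spheres around a line in the
incidence graph, since below half the girth every vertex has a unique neighbour closer to the
centre. A subhexagon is isometrically embedded, because two different paths of total length
less than 12 would close a cycle shorter than the girth; so the pairs at distance 6 inside a
subhexagon of order `(q, 1)` number `2(1 + q + q²) · q²`, against `(1 + q)(1 + q² + q⁴) · q⁵`
in the whole hexagon.
-/

open Finset

namespace SimpleGraph

variable {V : Type*} {G : SimpleGraph V}

theorem Walk.IsPath.egirth_le_length_add {u v : V} {p q : G.Walk u v} (hp : p.IsPath)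
    (hq : q.IsPath) (hne : p ≠ q) : G.egirth ≤ p.length + q.length := by
  obtain ⟨w, -, -, c, hc, hlen⟩ := hp.exists_isCycle_length_le_add_of_ne hq hne
  exact (egirth_le_length hc).trans (by exact_mod_cast hlen)

theorem Reachable.existsUnique_adj_dist_add_one {v u : V} (hr : G.Reachable v u)
    (hpos : 0 < G.dist v u) (hg : 2 * G.dist v u < G.egirth) :
    ∃! w, G.Adj w u ∧ G.dist v w + 1 = G.dist v u := by
  obtain ⟨p, hp, hlen⟩ := hr.exists_path_of_dist
  have hnil : ¬ p.Nil := by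
    rw [← Walk.length_eq_zero_iff]; omega
  have hadj := Walk.adj_penultimate hnil
  refine ⟨p.penultimate, ⟨hadj, ?_⟩, ?_⟩
  · have hle := dist_le p.dropLast
    have htri := (hr.trans hadj.symm.reachable).dist_triangle_left u
    rw [Walk.length_dropLast, dist_eq_one_iff_adj.mpr hadj] at *
    omega
  · rintro w ⟨hwu, hw⟩
    obtain ⟨p', -, hlen'⟩ := (hr.trans hwu.symm.reachable).exists_path_of_dist
    have hpath : (p'.concat hwu).IsPath :=
      (p'.concat hwu).isPath_of_length_eq_dist (by rw [Walk.length_concat]; omega)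
    have heq : p'.concat hwu = p := by
      by_contra hne
      have := hpath.egirth_le_length_add hp hne
      rw [Walk.length_concat, hlen', hw, hlen, ← two_mul] at this
      exact this.not_gt (by exact_mod_cast hg)
    rw [← heq, Walk.penultimate_concat]

theorem Coloring.even_dist_iff (c : G.Coloring Bool) {u v : V} (hr : G.Reachable u v) :
    Even (G.dist u v) ↔ (c u ↔ c v) := by
  obtain ⟨p, hp⟩ := hr.exists_walk_length_eq_dist
  rw [← hp, c.even_length_iff_congr]

theorem Coloring.dist_eq_add_one_or_of_adj (c : G.Coloring Bool) {v u w : V}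
    (hr : G.Reachable v u) (h : G.Adj u w) :
    G.dist v w = G.dist v u + 1 ∨ G.dist v w + 1 = G.dist v u := by
  have hne : G.dist v w ≠ G.dist v u := by
    intro heq
    have hu := c.even_dist_iff hr
    have hw := c.even_dist_iff (hr.trans h.reachable)
    have := c.valid h
    rw [heq, hu] at hw
    revert hw this
    cases c u <;> cases c v <;> cases c w <;> simp
  rcases h.diff_dist_adj (u := v) with h' | h' | h' <;> omega

theorem Embedding.dist_eq_of_two_mul_le_egirth {W : Type*} {H : SimpleGraph W} (f : H ↪g G)
    {u v : W} (hr : H.Reachable u v) (hg : 2 * H.dist u v ≤ G.egirth) :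
    G.dist (f u) (f v) = H.dist u v := by
  obtain ⟨p, hp, hlen⟩ := hr.exists_path_of_dist
  have hp' : (p.map f.toHom).IsPath := hp.map f.injective
  have hle : G.dist (f u) (f v) ≤ H.dist u v := by
    simpa [hlen] using dist_le (p.map f.toHom)
  by_contra hne
  obtain ⟨q, hq, hqlen⟩ : ∃ q : G.Walk (f u) (f v), q.IsPath ∧ q.length = G.dist (f u) (f v) :=
    (hr.map f.toHom).exists_path_of_dist
  have hqp : q ≠ p.map f.toHom := fun h => hne (by rw [← hqlen, h, Walk.length_map, hlen])
  have hcycle := hq.egirth_le_length_add hp' hqp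
  rw [hqlen, Walk.length_map, hlen] at hcycle
  have : 2 * H.dist u v ≤ G.dist (f u) (f v) + H.dist u v := by exact_mod_cast hg.trans hcycle
  omega

/-- Since `G.dist` is `0` between unreachable vertices, the sphere of radius `0` is `{v}` only
for connected `G`. -/
noncomputable def sphere [Fintype V] (G : SimpleGraph V) (v : V) (k : ℕ) : Finset V :=
  {w | G.dist v w = k}

@[simp]
theorem mem_sphere [Fintype V] {v w : V} {k : ℕ} : w ∈ G.sphere v k ↔ G.dist v w = k := by
  simp [sphere]

section Spheres

variable [Fintype V] [DecidableRel G.Adj] {v : V} {k d d' : ℕ}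

omit [DecidableRel G.Adj] in
theorem Connected.card_sphere_zero (hG : G.Connected) : #(G.sphere v 0) = 1 := by
  rw [card_eq_one]
  exact ⟨v, by ext w; simp [hG.dist_eq_zero_iff, eq_comm]⟩

theorem card_sphere_one : #(G.sphere v 1) = G.degree v := by
  rw [← card_neighborFinset_eq_degree]
  congr 1
  ext w
  simp [dist_eq_one_iff_adj]

theorem Connected.card_bipartiteBelow_sphere_succ (hG : G.Connected)
    (hk : 2 * (k + 1) < G.egirth) {w : V} (hw : w ∈ G.sphere v (k + 1)) :
    #((G.sphere v k).bipartiteBelow G.Adj w) = 1 := by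
  rw [mem_sphere] at hw
  obtain ⟨u, hu, huniq⟩ := (hG v w).existsUnique_adj_dist_add_one (by omega)
    (by rw [hw]; exact_mod_cast hk)
  rw [card_eq_one]
  refine ⟨u, ?_⟩
  ext x
  simp only [bipartiteBelow, mem_filter, mem_sphere, mem_singleton]
  constructor
  · rintro ⟨hx, hxw⟩
    exact huniq x ⟨hxw, by omega⟩
  · rintro rfl
    exact ⟨by omega, hu.1⟩

theorem Connected.card_bipartiteAbove_sphere_add_one (hG : G.Connected) (c : G.Coloring Bool)
    (hk : 2 * (k + 1) < G.egirth) {u : V} (hu : u ∈ G.sphere v (k + 1)) :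
    #((G.sphere v (k + 2)).bipartiteAbove G.Adj u) + 1 = G.degree u := by
  have hbelow : (G.neighborFinset u).filter (fun w => G.dist v w ≠ k + 2) =
      (G.sphere v k).bipartiteBelow G.Adj u := by
    ext w
    simp only [mem_filter, mem_neighborFinset, bipartiteBelow, mem_sphere] at hu ⊢
    constructor
    · rintro ⟨huw, hw⟩
      have := c.dist_eq_add_one_or_of_adj (hG v u) huw
      exact ⟨by omega, huw.symm⟩
    · rintro ⟨hw, hwu⟩
      exact ⟨hwu.symm, by omega⟩
  have habove : (G.neighborFinset u).filter (fun w => G.dist v w = k + 2) =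
      (G.sphere v (k + 2)).bipartiteAbove G.Adj u := by
    ext w
    simp [bipartiteAbove, and_comm]
  rw [← card_neighborFinset_eq_degree, ← card_filter_add_card_filter_not
    (s := G.neighborFinset u) (p := fun w => G.dist v w = k + 2), habove, hbelow,
    hG.card_bipartiteBelow_sphere_succ hk hu]

theorem Connected.card_bipartiteBelow_sphere_of_forall_dist_le (hG : G.Connected)
    (c : G.Coloring Bool) (hmax : ∀ x, G.dist v x ≤ k + 1) {w : V}
    (hw : w ∈ G.sphere v (k + 1)) :
    #((G.sphere v k).bipartiteBelow G.Adj w) = G.degree w := by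
  rw [← card_neighborFinset_eq_degree]
  congr 1
  ext x
  rw [mem_sphere] at hw
  simp only [bipartiteBelow, mem_filter, mem_sphere, mem_neighborFinset]
  have := hmax x
  constructor
  · exact fun ⟨_, hxw⟩ => hxw.symm
  · intro hwx
    have := c.dist_eq_add_one_or_of_adj (hG v w) hwx
    exact ⟨by omega, hwx.symm⟩

theorem Connected.card_sphere_succ_succ (hG : G.Connected) (c : G.Coloring Bool)
    (hk : 2 * (k + 2) < G.egirth) (hdeg : ∀ u ∈ G.sphere v (k + 1), G.degree u = d + 1) :
    #(G.sphere v (k + 2)) = #(G.sphere v (k + 1)) * d := by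
  have hk' : 2 * (k + 1) < G.egirth := lt_of_le_of_lt (by gcongr; simp) hk
  have := card_mul_eq_card_mul G.Adj (s := G.sphere v (k + 1)) (t := G.sphere v (k + 2))
    (m := d) (n := 1)
    (fun u hu => Nat.add_right_cancel
      ((hG.card_bipartiteAbove_sphere_add_one c hk' hu).trans (hdeg u hu)))
    (fun w hw => hG.card_bipartiteBelow_sphere_succ hk hw)
  omega

theorem Connected.card_sphere_mul_of_forall_dist_le (hG : G.Connected) (c : G.Coloring Bool)
    (hk : 2 * (k + 1) < G.egirth) (hmax : ∀ x, G.dist v x ≤ k + 2)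
    (hdeg : ∀ u ∈ G.sphere v (k + 1), G.degree u = d + 1)
    (hdeg' : ∀ w ∈ G.sphere v (k + 2), G.degree w = d') :
    #(G.sphere v (k + 1)) * d = #(G.sphere v (k + 2)) * d' :=
  card_mul_eq_card_mul G.Adj (s := G.sphere v (k + 1)) (t := G.sphere v (k + 2))
    (fun u hu => Nat.add_right_cancel
      ((hG.card_bipartiteAbove_sphere_add_one c hk hu).trans (hdeg u hu)))
    (fun w hw => (hG.card_bipartiteBelow_sphere_of_forall_dist_le c hmax hw).trans (hdeg' w hw))

end Spheres

end SimpleGraph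

section Incidence

variable {P L : Type*} {I : P → L → Prop}

@[simp]
theorem incidenceGraph_adj_inl_inr {p : P} {l : L} :
    (incidenceGraph I).Adj (.inl p) (.inr l) ↔ I p l := Iff.rfl

@[simp]
theorem incidenceGraph_adj_inr_inl {p : P} {l : L} :
    (incidenceGraph I).Adj (.inr l) (.inl p) ↔ I p l := Iff.rfl

@[simp]
theorem incidenceGraph_not_adj_inl_inl {p p' : P} : ¬ (incidenceGraph I).Adj (.inl p) (.inl p') :=
  id

@[simp]
theorem incidenceGraph_not_adj_inr_inr {l l' : L} : ¬ (incidenceGraph I).Adj (.inr l) (.inr l') :=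
  id

def incidenceColoring (I : P → L → Prop) : (incidenceGraph I).Coloring Bool :=
  Coloring.mk Sum.isLeft (by rintro (p | l) (p' | l') h <;> simp_all)

@[simp]
theorem incidenceColoring_apply (w : P ⊕ L) : incidenceColoring I w = w.isLeft := rfl

theorem incidenceGraph_neighborSet_inr (l : L) :
    (incidenceGraph I).neighborSet (.inr l) = Sum.inl '' {p | I p l} := by
  ext (p | l') <;> simp

theorem incidenceGraph_neighborSet_inl (p : P) :
    (incidenceGraph I).neighborSet (.inl p) = Sum.inr '' {l | I p l} := by
  ext (p' | l) <;> simp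

def incidenceGraphEmbedding (I : P → L → Prop) (P' : Set P) (L' : Set L) :
    incidenceGraph (fun (p : P') (l : L') => I p l) ↪g incidenceGraph I where
  toEmbedding := (Function.Embedding.subtype _).sumMap (Function.Embedding.subtype _)
  map_rel_iff' := by rintro (p | l) (p' | l') <;> simp

namespace IsGenPolygon

variable {n s t : ℕ}

theorem connected (h : IsGenPolygon I n s t) : (incidenceGraph I).Connected :=
  have := h.pts_nonempty
  connected_of_ediam_ne_top (by simp [h.ediam_eq])

theorem dist_le (h : IsGenPolygon I n s t) (u v : P ⊕ L) : (incidenceGraph I).dist u v ≤ n := by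
  have := dist_le_diam (G := incidenceGraph I) (u := u) (v := v) (by simp [h.ediam_eq])
  rwa [diam, h.ediam_eq, ENat.toNat_natCast] at this

theorem degree_inr [Fintype P] [Fintype L] [DecidableRel (incidenceGraph I).Adj]
    (h : IsGenPolygon I n s t) (l : L) : (incidenceGraph I).degree (.inr l) = s + 1 := by
  rw [← card_neighborSet_eq_degree, ← Nat.card_eq_fintype_card, Nat.card_coe_set_eq,
    incidenceGraph_neighborSet_inr, Set.ncard_image_of_injective _ Sum.inl_injective, h.line_card]

theorem degree_inl [Fintype P] [Fintype L] [DecidableRel (incidenceGraph I).Adj]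
    (h : IsGenPolygon I n s t) (p : P) : (incidenceGraph I).degree (.inl p) = t + 1 := by
  rw [← card_neighborSet_eq_degree, ← Nat.card_eq_fintype_card, Nat.card_coe_set_eq,
    incidenceGraph_neighborSet_inl, Set.ncard_image_of_injective _ Sum.inr_injective, h.point_card]

theorem even_dist_inr_iff (h : IsGenPolygon I n s t) (l : L) (w : P ⊕ L) :
    Even ((incidenceGraph I).dist (.inr l) w) ↔ w.isRight := by
  rw [(incidenceColoring I).even_dist_iff (h.connected _ _)]
  cases w <;> simp

theorem degree_of_mem_sphere_inr [Fintype P] [Fintype L] [DecidableRel (incidenceGraph I).Adj]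
    (h : IsGenPolygon I n s t) {l : L} {k : ℕ} {w : P ⊕ L}
    (hw : w ∈ (incidenceGraph I).sphere (.inr l) k) :
    (incidenceGraph I).degree w = if Even k then s + 1 else t + 1 := by
  rw [mem_sphere] at hw
  have := hw ▸ h.even_dist_inr_iff l w
  cases w with
  | inl p => simp_all [h.degree_inl]
  | inr l' => simp_all [h.degree_inr]

theorem nonempty_lines (h : IsGenPolygon I n s t) : Nonempty L := by
  obtain ⟨p⟩ := h.pts_nonempty
  obtain ⟨l, -⟩ := Set.nonempty_of_ncard_ne_zero (s := {l | I p l}) (by simp [h.point_card])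
  exact ⟨l⟩

theorem card_filter_dist_inr_eq_card_sphere [Fintype P] [Fintype L] (h : IsGenPolygon I n s t)
    (l : L) {k : ℕ} (hk : Even k) :
    #{l' | (incidenceGraph I).dist (.inr l) (.inr l') = k} =
      #((incidenceGraph I).sphere (.inr l) k) := by
  rw [← card_map Function.Embedding.inr]
  congr 1
  ext (p | l')
  · suffices (incidenceGraph I).dist (.inr l) (.inl p) ≠ k by simpa
    rintro rfl
    simpa using (h.even_dist_inr_iff l (.inl p)).mp hk
  · simp

section Hexagon

variable [Fintype P] [Fintype L] (h : IsGenPolygon I 6 s t) (l : L)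
include h

theorem card_sphere_inr_succ_succ {k : ℕ} (hk : k ≤ 3) :
    #((incidenceGraph I).sphere (.inr l) (k + 2)) =
      #((incidenceGraph I).sphere (.inr l) (k + 1)) * if Even k then t else s := by
  classical
  refine h.connected.card_sphere_succ_succ (incidenceColoring I) ?_ fun u hu => ?_
  · rw [h.egirth_eq]; norm_cast; omega
  · rw [h.degree_of_mem_sphere_inr hu]
    by_cases hk : Even k <;> simp [hk, Nat.even_add_one]

theorem card_sphere_inr_five_mul :
    #((incidenceGraph I).sphere (.inr l) 5) * t =
      #((incidenceGraph I).sphere (.inr l) 6) * (s + 1) := by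
  classical
  refine h.connected.card_sphere_mul_of_forall_dist_le (k := 4) (incidenceColoring I) ?_
    (h.dist_le _) (fun u hu => ?_) (fun w hw => ?_)
  · rw [h.egirth_eq]; norm_num
  · rw [h.degree_of_mem_sphere_inr hu]; simp [Nat.even_iff]
  · rw [h.degree_of_mem_sphere_inr hw]; simp [Nat.even_iff]

theorem card_sphere_inr_two : #((incidenceGraph I).sphere (.inr l) 2) = (s + 1) * t := by
  classical
  rw [h.card_sphere_inr_succ_succ l (k := 0) (by norm_num), card_sphere_one, h.degree_inr]
  simp

theorem card_sphere_inr_four :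
    #((incidenceGraph I).sphere (.inr l) 4) = (s + 1) * t * (s * t) := by
  rw [h.card_sphere_inr_succ_succ l (k := 2) (by norm_num),
    h.card_sphere_inr_succ_succ l (k := 1) (by norm_num), h.card_sphere_inr_two]
  simp [mul_assoc]

theorem card_sphere_inr_six : #((incidenceGraph I).sphere (.inr l) 6) = s ^ 2 * t ^ 3 := by
  have h6 := h.card_sphere_inr_five_mul l
  rw [h.card_sphere_inr_succ_succ l (k := 3) (by norm_num), h.card_sphere_inr_four] at h6
  refine Nat.eq_of_mul_eq_mul_right s.add_one_pos (h6.symm.trans ?_)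
  rw [if_neg (by decide)]
  ring

theorem card_lines : Fintype.card L = 1 + (s + 1) * t + (s + 1) * t * (s * t) + s ^ 2 * t ^ 3 := by
  obtain ⟨l⟩ := h.nonempty_lines
  have hmaps : ∀ l' ∈ (univ : Finset L),
      (incidenceGraph I).dist (.inr l) (.inr l') ∈ ({0, 2, 4, 6} : Finset ℕ) := by
    intro l' _
    have := h.dist_le (.inr l) (.inr l')
    obtain ⟨m, hm⟩ := (h.even_dist_inr_iff l (.inr l')).mpr rfl
    simp only [mem_insert, mem_singleton]
    omega
  rw [← card_univ, card_eq_sum_card_fiberwise hmaps, sum_insert (by decide), sum_insert (by decide),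
    sum_insert (by decide), sum_singleton]
  rw [h.card_filter_dist_inr_eq_card_sphere l (by decide),
    h.card_filter_dist_inr_eq_card_sphere l (by decide),
    h.card_filter_dist_inr_eq_card_sphere l (by decide),
    h.card_filter_dist_inr_eq_card_sphere l (by decide), h.connected.card_sphere_zero,
    h.card_sphere_inr_two, h.card_sphere_inr_four, h.card_sphere_inr_six]
  ring

theorem card_filter_dist_inr_inr_eq_six :
    #{e : L × L | (incidenceGraph I).dist (.inr e.1) (.inr e.2) = 6} =
      Fintype.card L * (s ^ 2 * t ^ 3) := by
  rw [card_filter, Fintype.sum_prod_type]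
  simp_rw [← card_filter, fun l => h.card_filter_dist_inr_eq_card_sphere l (by decide : Even 6),
    h.card_sphere_inr_six]
  simp

end Hexagon

theorem dist_inr_val_inr_val {s' t' : ℕ} (h : IsGenPolygon I n s t) {P' : Set P} {L' : Set L}
    (h' : IsGenPolygon (fun (p : P') (l : L') => I p l) n s' t') (l₁ l₂ : L') :
    (incidenceGraph I).dist (.inr l₁.1) (.inr l₂.1) =
      (incidenceGraph (fun (p : P') (l : L') => I p l)).dist (.inr l₁) (.inr l₂) := by
  refine (incidenceGraphEmbedding I P' L').dist_eq_of_two_mul_le_egirth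
    (h'.connected (.inr l₁) (.inr l₂)) ?_
  rw [h.egirth_eq]
  exact_mod_cast Nat.mul_le_mul_left 2 (h'.dist_le _ _)

theorem card_filter_dist_inr_inr_eq_six_of_mem {s' t' : ℕ} [Fintype P] [Fintype L]
    (h : IsGenPolygon I 6 s t) {P' : Set P} {L' : Set L} [DecidablePred (· ∈ L')]
    (h' : IsGenPolygon (fun (p : P') (l : L') => I p l) 6 s' t') :
    #{e : L × L | (incidenceGraph I).dist (.inr e.1) (.inr e.2) = 6 ∧ e.1 ∈ L' ∧ e.2 ∈ L'} =
      Fintype.card L' * (s' ^ 2 * t' ^ 3) := by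
  classical
  rw [← h'.card_filter_dist_inr_inr_eq_six]
  symm
  refine card_nbij (fun e => (e.1.1, e.2.1)) (fun e he => ?_) (fun e _ e' _ he => ?_) ?_
  · simp only [coe_filter, mem_univ, true_and, Set.mem_ofPred_eq] at he ⊢
    exact ⟨(h.dist_inr_val_inr_val h' _ _).trans he, e.1.2, e.2.2⟩
  · simp only [Prod.mk.injEq] at he
    exact Prod.ext (Subtype.ext he.1) (Subtype.ext he.2)
  · rintro ⟨l₁, l₂⟩ he
    simp only [coe_filter, mem_univ, true_and, Set.mem_ofPred_eq] at he
    obtain ⟨hd, h₁, h₂⟩ := he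
    refine ⟨(⟨l₁, h₁⟩, ⟨l₂, h₂⟩), ?_, rfl⟩
    simpa [← h.dist_inr_val_inr_val h'] using hd

end IsGenPolygon

end Incidence

/-- In a finite generalized hexagon of order `(q, q)` in which any two lines at distance 6
lie in a unique subhexagon of order `(q, 1)`, the total number of subhexagons of order
`(q, 1)` is `q³(1+q)(q²−q+1)/2`. -/
theorem card_subhexagons {P L : Type*} [Fintype P] [Fintype L]
    {I : P → L → Prop} {q : ℕ} (hq : 2 ≤ q) (hhex : IsGenPolygon I 6 q q)
    (hunique : ∀ l₁ l₂ : L,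
      (incidenceGraph I).dist (Sum.inr l₁) (Sum.inr l₂) = 6 →
      ∃! x : Set P × Set L, IsSubhexagon I q 1 x.1 x.2 ∧ l₁ ∈ x.2 ∧ l₂ ∈ x.2) :
    {x : Set P × Set L | IsSubhexagon I q 1 x.1 x.2}.ncard =
      q ^ 3 * (1 + q) * (q ^ 2 - q + 1) / 2 := by
  classical
  rw [Set.ncard_eq_toFinset_card', Set.toFinset_ofPred]
  set N := #{x : Set P × Set L | IsSubhexagon I q 1 x.1 x.2}
  have hcount := card_mul_eq_card_mul (fun (e : L × L) (x : Set P × Set L) => e.1 ∈ x.2 ∧ e.2 ∈ x.2)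
    (s := {e | (incidenceGraph I).dist (.inr e.1) (.inr e.2) = 6})
    (t := {x | IsSubhexagon I q 1 x.1 x.2}) (m := 1) (n := 2 * (1 + q + q ^ 2) * q ^ 2)
    (fun e he => by
      rw [bipartiteAbove, filter_filter, ← Fintype.existsUnique_iff_card_one]
      exact hunique e.1 e.2 (mem_filter.1 he).2)
    (fun x hx => by
      have hsub := (mem_filter.1 hx).2.2
      rw [bipartiteBelow, filter_filter, hhex.card_filter_dist_inr_inr_eq_six_of_mem hsub,
        hsub.card_lines]
      ring)
  rw [hhex.card_filter_dist_inr_inr_eq_six, hhex.card_lines] at hcount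
  have key : 2 * N * ((1 + q + q ^ 2) * q ^ 2) =
      q ^ 3 * (1 + q) * (q ^ 2 - q + 1) * ((1 + q + q ^ 2) * q ^ 2) := by
    zify [Nat.le_self_pow two_ne_zero q] at hcount ⊢
    linear_combination -hcount
  have := Nat.eq_of_mul_eq_mul_right (by positivity) key
  omega
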